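/- arXiv:1708.04283 — 2 statements merged into one kernel-verified Lean document; each statement's English description precedes it below -/
import Mathlib

section
/- Let L, S, U, X, Y, Z be finite random variables with joint PMF W_L·W_S·q_{U,X|S}·W_{Y,Z|S,X} (so L is independent of (S,U,X,Y,Z)), and set V = (L,U), S̃ = (L,S), Ỹ = (L,Y). Then I(V; Ỹ | U) − I(V; Z | U) = H(L). -/
open scoped BigOperators Classical
open Finset

noncomputable section

/-- A probability mass function on a finite alphabet. -/
def IsPMF {α : Type*} [Fintype α] (p : α → ℝ) : Prop :=
  (∀ a, 0 ≤ p a) ∧ ∑ a, p a = 1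

/-- Shannon entropy (base 2) of a PMF on a finite alphabet. -/
def ent {α : Type*} [Fintype α] (p : α → ℝ) : ℝ :=
  -∑ a, p a * Real.logb 2 (p a)

/-- Pushforward of a PMF along a map (distribution of a random variable). -/
def pf {Ω T : Type*} [Fintype Ω] (p : Ω → ℝ) (f : Ω → T) : T → ℝ :=
  fun t => ∑ ω, if f ω = t then p ω else 0

/-- Mutual information of a joint PMF on a product alphabet. -/
def mi2 {α β : Type*} [Fintype α] [Fintype β] (p : α × β → ℝ) : ℝ :=
  ent (fun a => ∑ b, p (a, b)) + ent (fun b => ∑ a, p (a, b)) - ent p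

/-- Conditional entropy H(β | α) for a joint PMF on α × β. -/
def condEnt {α β : Type*} [Fintype α] [Fintype β] (p : α × β → ℝ) : ℝ :=
  ent p - ent (fun a => ∑ b, p (a, b))

/-- Conditional mutual information I(β; γ | α) for a joint PMF on α × β × γ. -/
def cmi {α β γ : Type*} [Fintype α] [Fintype β] [Fintype γ] (p : α × β × γ → ℝ) : ℝ :=
  ent (fun ab : α × β => ∑ c, p (ab.1, ab.2, c))
    + ent (fun ac : α × γ => ∑ b, p (ac.1, b, ac.2))
    - ent p - ent (fun a => ∑ b, ∑ c, p (a, b, c))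

/-- Total variation distance between two PMFs on a finite alphabet. -/
def tv {α : Type*} [Fintype α] (p q : α → ℝ) : ℝ :=
  (∑ a, |p a - q a|) / 2

/- ### Auxiliary lemmas -/

lemma pf_sum {Ω T : Type*} [Fintype Ω] [Fintype T] (p : Ω → ℝ) (f : Ω → T) :
    ∑ t, pf p f t = ∑ ω, p ω := by
  unfold pf
  rw [Finset.sum_comm]
  simp

lemma pf_comp {Ω T T' : Type*} [Fintype Ω] [Fintype T] (p : Ω → ℝ) (f : Ω → T) (g : T → T') :
    pf p (fun ω => g (f ω)) = pf (pf p f) g := by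
  funext t'
  unfold pf
  symm
  calc ∑ t, (if g t = t' then ∑ ω, (if f ω = t then p ω else 0) else 0)
      = ∑ t, ∑ ω, (if f ω = t then (if g t = t' then p ω else 0) else 0) := by
        apply Finset.sum_congr rfl; intro t _
        split <;> simp
    _ = ∑ ω, ∑ t, (if f ω = t then (if g t = t' then p ω else 0) else 0) := Finset.sum_comm
    _ = ∑ ω : Ω, if (fun ω => g (f ω)) ω = t' then p ω else 0 := by
        apply Finset.sum_congr rfl; intro ω _
        simp [Finset.sum_ite_eq]

lemma pf_apply_inj {Ω T : Type*} [Fintype Ω] (q : Ω → ℝ) {g : Ω → T}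
    (hg : Function.Injective g) (a : Ω) : pf q g (g a) = q a := by
  unfold pf
  simp [hg.eq_iff]

lemma ent_pf_inj {Ω T : Type*} [Fintype Ω] [Fintype T] (q : Ω → ℝ) {g : Ω → T}
    (hg : Function.Injective g) : ent (pf q g) = ent q := by
  unfold ent
  congr 1
  rw [← Finset.sum_subset (Finset.subset_univ (Finset.univ.image g))]
  · rw [Finset.sum_image (fun x _ y _ h => hg h)]
    apply Finset.sum_congr rfl
    intro ω _
    rw [pf_apply_inj q hg]
  · intro t _ ht
    have h0 : pf q g t = 0 := by
      apply Finset.sum_eq_zero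
      intro ω _
      rw [if_neg]
      intro h; exact ht (Finset.mem_image.mpr ⟨ω, Finset.mem_univ ω, h⟩)
    simp [h0]

lemma ent_prod {A B : Type*} [Fintype A] [Fintype B] (pA : A → ℝ) (pB : B → ℝ)
    (hA : ∑ a, pA a = 1) (hB : ∑ b, pB b = 1) :
    ent (fun ab : A × B => pA ab.1 * pB ab.2) = ent pA + ent pB := by
  unfold ent
  rw [Fintype.sum_prod_type]
  have key : ∀ x y : ℝ, x * y * Real.logb 2 (x * y)
      = y * (x * Real.logb 2 x) + x * (y * Real.logb 2 y) := by
    intro x y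
    rcases eq_or_ne x 0 with hx | hx
    · simp [hx]
    rcases eq_or_ne y 0 with hy | hy
    · simp [hy]
    rw [Real.logb_mul hx hy]; ring
  simp only [key, Finset.sum_add_distrib, ← Finset.mul_sum, ← Finset.sum_mul, hA, hB,
    one_mul, mul_one]
  ring

lemma pf_marg12 {Ω A B C : Type*} [Fintype Ω] [Fintype C] (p : Ω → ℝ) (F : Ω → A × B × C) :
    (fun ab : A × B => ∑ c, pf p F (ab.1, ab.2, c))
      = pf p (fun ω => ((F ω).1, (F ω).2.1)) := by
  funext ab
  unfold pf
  rw [Finset.sum_comm]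
  apply Finset.sum_congr rfl
  intro ω _
  simp only [Prod.ext_iff]
  by_cases h : (F ω).1 = ab.1 ∧ (F ω).2.1 = ab.2
  · simp [h.1, h.2, Finset.sum_ite_eq]
  · rw [if_neg h]
    apply Finset.sum_eq_zero
    intro c _
    rw [if_neg]
    tauto

lemma pf_marg13 {Ω A B C : Type*} [Fintype Ω] [Fintype B] (p : Ω → ℝ) (F : Ω → A × B × C) :
    (fun ac : A × C => ∑ b, pf p F (ac.1, b, ac.2))
      = pf p (fun ω => ((F ω).1, (F ω).2.2)) := by
  funext ac
  unfold pf
  rw [Finset.sum_comm]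
  apply Finset.sum_congr rfl
  intro ω _
  simp only [Prod.ext_iff]
  by_cases h : (F ω).1 = ac.1 ∧ (F ω).2.2 = ac.2
  · simp [h.1, h.2, Finset.sum_ite_eq]
  · rw [if_neg h]
    apply Finset.sum_eq_zero
    intro b _
    rw [if_neg]
    tauto

lemma pf_marg1 {Ω A B C : Type*} [Fintype Ω] [Fintype B] [Fintype C]
    (p : Ω → ℝ) (F : Ω → A × B × C) :
    (fun a : A => ∑ b, ∑ c, pf p F (a, b, c)) = pf p (fun ω => (F ω).1) := by
  funext a
  unfold pf
  rw [Finset.sum_congr rfl fun b _ => Finset.sum_comm, Finset.sum_comm]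
  apply Finset.sum_congr rfl
  intro ω _
  simp only [Prod.ext_iff]
  simp [ite_and, Finset.sum_ite_eq]

lemma pf_fac {L Ω' T : Type*} [Fintype L] [Fintype Ω'] (WL : L → ℝ) (p' : Ω' → ℝ)
    (h : Ω' → T) :
    pf (fun ω : L × Ω' => WL ω.1 * p' ω.2) (fun ω => (ω.1, h ω.2))
      = fun lt : L × T => WL lt.1 * pf p' h lt.2 := by
  funext lt
  unfold pf
  rw [Fintype.sum_prod_type]
  simp only [Prod.ext_iff, ite_and]
  simp [Finset.sum_ite_eq', Finset.mul_sum, mul_ite, mul_zero]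

lemma pf_fac_snd {L Ω' T : Type*} [Fintype L] [Fintype Ω'] (WL : L → ℝ) (p' : Ω' → ℝ)
    (hL : ∑ l, WL l = 1) (h : Ω' → T) :
    pf (fun ω : L × Ω' => WL ω.1 * p' ω.2) (fun ω => h ω.2) = pf p' h := by
  funext t
  unfold pf
  rw [Fintype.sum_prod_type]
  have hsplit : ∀ (c : Prop) [Decidable c] (a b : ℝ),
      (if c then a * b else 0) = a * (if c then b else 0) := by
    intro c _ a b; split <;> simp
  simp only [hsplit]
  simp only [← Finset.mul_sum]
  rw [← Finset.sum_mul, hL, one_mul]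

lemma pf_fac_fst {L Ω' : Type*} [Fintype L] [Fintype Ω'] (WL : L → ℝ) (p' : Ω' → ℝ)
    (hp' : ∑ ω', p' ω' = 1) :
    pf (fun ω : L × Ω' => WL ω.1 * p' ω.2) (fun ω => ω.1) = WL := by
  funext l
  unfold pf
  rw [Fintype.sum_prod_type]
  simp [Finset.sum_ite_eq', ← Finset.mul_sum, hp']

/-- The joint PMF of `(S,U,X,Y,Z)` (with `L` integrated out). -/
def pAux {S U X Y Z : Type*} (WS : S → ℝ) (qUX : S → U × X → ℝ) (Wch : S × X → Y × Z → ℝ) :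
    S × U × X × Y × Z → ℝ :=
  fun ω => WS ω.1 * (qUX ω.1 (ω.2.1, ω.2.2.1) * Wch (ω.1, ω.2.2.1) (ω.2.2.2.1, ω.2.2.2.2))

/-- under the joint PMF `W_L·W_S·q_{U,X|S}·W_{Y,Z|S,X}` (so `L` is independent
of `(S,U,X,Y,Z)`), with `V = (L,U)` and `Ỹ = (L,Y)`,
one has `I(V;Ỹ|U) − I(V;Z|U) = H(L)`. -/
theorem stmt_7 {L S U X Y Z : Type*}
    [Fintype L] [Fintype S] [Fintype U] [Fintype X] [Fintype Y] [Fintype Z]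
    (WL : L → ℝ) (WS : S → ℝ) (qUX : S → U × X → ℝ) (Wch : S × X → Y × Z → ℝ)
    (hWL : IsPMF WL) (hWS : IsPMF WS) (hq : ∀ s, IsPMF (qUX s)) (hW : ∀ sx, IsPMF (Wch sx))
    (p : L × S × U × X × Y × Z → ℝ)
    (hfac : ∀ l s u x y z,
      p (l, s, u, x, y, z) = WL l * WS s * qUX s (u, x) * Wch (s, x) (y, z)) :
    cmi (pf p (fun ω => (ω.2.2.1, ((ω.1, ω.2.2.1) : L × U), ((ω.1, ω.2.2.2.2.1) : L × Y))))
      - cmi (pf p (fun ω => (ω.2.2.1, ((ω.1, ω.2.2.1) : L × U), ω.2.2.2.2.2)))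
    = ent (pf p (fun ω => ω.1)) := by
  set p' : S × U × X × Y × Z → ℝ := pAux WS qUX Wch with hp'def
  have hp : p = fun ω : L × S × U × X × Y × Z => WL ω.1 * p' ω.2 := by
    funext ω
    obtain ⟨l, s, u, x, y, z⟩ := ω
    rw [hfac l s u x y z]
    simp only [hp'def, pAux]
    ring
  -- total mass of p' is 1
  have hch : ∀ s x, ∑ y, ∑ z, Wch (s, x) (y, z) = 1 := by
    intro s x
    rw [← Fintype.sum_prod_type]
    exact (hW (s, x)).2
  have hqs : ∀ s, ∑ u, ∑ x, qUX s (u, x) = 1 := by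
    intro s
    rw [← Fintype.sum_prod_type]
    exact (hq s).2
  have hp'1 : ∑ ω', p' ω' = 1 := by
    simp only [hp'def, pAux]
    simp only [Fintype.sum_prod_type]
    have step1 : ∀ s u x, ∑ y, ∑ z,
        WS s * (qUX s (u, x) * Wch (s, x) (y, z)) = WS s * qUX s (u, x) := by
      intro s u x
      simp only [← Finset.mul_sum]
      rw [hch s x, mul_one]
    simp only [step1]
    have step2 : ∀ s, ∑ u, ∑ x, WS s * qUX s (u, x) = WS s := by
      intro s
      simp only [← Finset.mul_sum]
      rw [hqs s, mul_one]
    simp only [step2]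
    exact hWS.2
  -- marginal PMFs of p'
  have hr1 : ∑ u, pf p' (fun ω' : S × U × X × Y × Z => ω'.2.1) u = 1 := by
    rw [pf_sum]; exact hp'1
  have ht1 : ∑ uy, pf p' (fun ω' : S × U × X × Y × Z => (ω'.2.1, ω'.2.2.2.1)) uy = 1 := by
    rw [pf_sum]; exact hp'1
  have htz1 : ∑ uz, pf p' (fun ω' : S × U × X × Y × Z => (ω'.2.1, ω'.2.2.2.2)) uz = 1 := by
    rw [pf_sum]; exact hp'1
  rw [hp]
  unfold cmi
  simp only [pf_marg12, pf_marg13, pf_marg1]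
  -- abbreviations
  set pfull : L × S × U × X × Y × Z → ℝ :=
    fun ω => WL ω.1 * p' ω.2 with hpfull
  -- injective maps
  have inj2 : Function.Injective (fun v : L × U => (v.2, v)) := by
    intro a b h
    exact congrArg Prod.snd h
  have inj1 : Function.Injective
      (fun w : L × U × Y => (w.2.1, ((w.1, w.2.1) : L × U), ((w.1, w.2.2) : L × Y))) := by
    rintro ⟨l1, u1, y1⟩ ⟨l2, u2, y2⟩ h
    simp only [Prod.mk.injEq] at h ⊢
    tauto
  have inj3 : Function.Injective
      (fun w : L × U × Y => (w.2.1, ((w.1, w.2.2) : L × Y))) := by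
    rintro ⟨l1, u1, y1⟩ ⟨l2, u2, y2⟩ h
    simp only [Prod.mk.injEq] at h ⊢
    tauto
  have inj4 : Function.Injective
      (fun w : L × U × Z => (w.2.1, ((w.1, w.2.1) : L × U), w.2.2)) := by
    rintro ⟨l1, u1, z1⟩ ⟨l2, u2, z2⟩ h
    simp only [Prod.mk.injEq] at h ⊢
    tauto
  -- the individual entropy computations
  have Hlr : ent (pf pfull (fun ω => (ω.2.2.1, ((ω.1, ω.2.2.1) : L × U))))
      = ent WL + ent (pf p' (fun ω' : S × U × X × Y × Z => ω'.2.1)) := by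
    rw [(pf_comp pfull (fun ω => (ω.1, ω.2.2.1)) (fun v : L × U => (v.2, v)) :
      pf pfull (fun ω => (ω.2.2.1, ((ω.1, ω.2.2.1) : L × U))) = _)]
    rw [ent_pf_inj _ inj2]
    rw [(pf_fac WL p' (fun ω' : S × U × X × Y × Z => ω'.2.1) :
      pf pfull (fun ω => (ω.1, ω.2.2.1)) = _)]
    exact ent_prod WL _ hWL.2 hr1
  have Hlt : ent (pf pfull (fun ω => (ω.2.2.1, ((ω.1, ω.2.2.2.2.1) : L × Y))))
      = ent WL + ent (pf p' (fun ω' : S × U × X × Y × Z => (ω'.2.1, ω'.2.2.2.1))) := by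
    rw [(pf_comp pfull (fun ω => (ω.1, (ω.2.2.1, ω.2.2.2.2.1)))
        (fun w : L × U × Y => (w.2.1, ((w.1, w.2.2) : L × Y))) :
      pf pfull (fun ω => (ω.2.2.1, ((ω.1, ω.2.2.2.2.1) : L × Y))) = _)]
    rw [ent_pf_inj _ inj3]
    rw [(pf_fac WL p' (fun ω' : S × U × X × Y × Z => (ω'.2.1, ω'.2.2.2.1)) :
      pf pfull (fun ω => (ω.1, (ω.2.2.1, ω.2.2.2.2.1))) = _)]
    exact ent_prod WL _ hWL.2 ht1
  have Hjoint1 : ent (pf pfull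
        (fun ω => (ω.2.2.1, ((ω.1, ω.2.2.1) : L × U), ((ω.1, ω.2.2.2.2.1) : L × Y))))
      = ent WL + ent (pf p' (fun ω' : S × U × X × Y × Z => (ω'.2.1, ω'.2.2.2.1))) := by
    rw [(pf_comp pfull (fun ω => (ω.1, (ω.2.2.1, ω.2.2.2.2.1)))
        (fun w : L × U × Y => (w.2.1, ((w.1, w.2.1) : L × U), ((w.1, w.2.2) : L × Y))) :
      pf pfull (fun ω => (ω.2.2.1, ((ω.1, ω.2.2.1) : L × U), ((ω.1, ω.2.2.2.2.1) : L × Y)))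
        = _)]
    rw [ent_pf_inj _ inj1]
    rw [(pf_fac WL p' (fun ω' : S × U × X × Y × Z => (ω'.2.1, ω'.2.2.2.1)) :
      pf pfull (fun ω => (ω.1, (ω.2.2.1, ω.2.2.2.2.1))) = _)]
    exact ent_prod WL _ hWL.2 ht1
  have Hr : ent (pf pfull (fun ω => ω.2.2.1))
      = ent (pf p' (fun ω' : S × U × X × Y × Z => ω'.2.1)) := by
    rw [(pf_fac_snd WL p' hWL.2 (fun ω' : S × U × X × Y × Z => ω'.2.1) :
      pf pfull (fun ω => ω.2.2.1) = _)]
  have Hjoint2 : ent (pf pfull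
        (fun ω => (ω.2.2.1, ((ω.1, ω.2.2.1) : L × U), ω.2.2.2.2.2)))
      = ent WL + ent (pf p' (fun ω' : S × U × X × Y × Z => (ω'.2.1, ω'.2.2.2.2))) := by
    rw [(pf_comp pfull (fun ω => (ω.1, (ω.2.2.1, ω.2.2.2.2.2)))
        (fun w : L × U × Z => (w.2.1, ((w.1, w.2.1) : L × U), w.2.2)) :
      pf pfull (fun ω => (ω.2.2.1, ((ω.1, ω.2.2.1) : L × U), ω.2.2.2.2.2)) = _)]
    rw [ent_pf_inj _ inj4]
    rw [(pf_fac WL p' (fun ω' : S × U × X × Y × Z => (ω'.2.1, ω'.2.2.2.2)) :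
      pf pfull (fun ω => (ω.1, (ω.2.2.1, ω.2.2.2.2.2))) = _)]
    exact ent_prod WL _ hWL.2 htz1
  have Huz : ent (pf pfull (fun ω => (ω.2.2.1, ω.2.2.2.2.2)))
      = ent (pf p' (fun ω' : S × U × X × Y × Z => (ω'.2.1, ω'.2.2.2.2))) := by
    rw [(pf_fac_snd WL p' hWL.2 (fun ω' : S × U × X × Y × Z => (ω'.2.1, ω'.2.2.2.2)) :
      pf pfull (fun ω => (ω.2.2.1, ω.2.2.2.2.2)) = _)]
  have Hfst : ent (pf pfull (fun ω => ω.1)) = ent WL := by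
    rw [pf_fac_fst WL p' hp'1]
  rw [Hlr, Hlt, Hjoint1, Hr, Hjoint2, Huz, Hfst]
  ring
end
end

section
/- Let U, V, S, X, Y, Z, L be finite random variables such that V — (S,U,X) — Y forms a Markov chain, Ỹ = (L,Y), Z̃ = (S,X), and S̃ = (L,S). Then I(V; Ỹ | U) − I(V; Z̃ | U) ≤ H(L). -/
open scoped BigOperators Classical
open Finset

noncomputable section

/-! The chain rule gives
`I(V;L,Y|U) ≤ I(V;(S,X),Y,L|U) = I(V;S,X|U) + I(V;Y|U,S,X) + I(V;L|U,S,X,Y)`;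
the middle term vanishes by the Markov chain and the last one is at most `H(L)`.
Every information inequality used reduces to submodularity of entropy, which follows by applying
`log t ≥ 1 - 1/t` pointwise to `H(f) = -∑ ω, p ω * log P(f = f ω)`. -/

open Real

lemma one_sub_div_div_log_le_logb {x y z w : ℝ} (hx : 0 < x) (hy : 0 < y) (hz : 0 < z)
    (hw : 0 < w) :
    (1 - z * w / (x * y)) / log 2 ≤ logb 2 x + logb 2 y - logb 2 z - logb 2 w := by
  have h := one_sub_inv_le_log_of_pos (div_pos (mul_pos hx hy) (mul_pos hz hw))
  rw [inv_div, log_div (by positivity) (by positivity), log_mul hx.ne' hy.ne',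
    log_mul hz.ne' hw.ne'] at h
  have hsplit : logb 2 x + logb 2 y - logb 2 z - logb 2 w
      = (log x + log y - (log z + log w)) / log 2 := by
    simp only [logb]; ring
  rw [hsplit]
  exact div_le_div_of_nonneg_right h (log_nonneg one_le_two)

section Pushforward

variable {Ω : Type*} [Fintype Ω] {p : Ω → ℝ}
variable {A B T : Type*}

lemma pf_nonneg (hp : ∀ ω, 0 ≤ p ω) (f : Ω → T) (t : T) : 0 ≤ pf p f t :=
  sum_nonneg fun ω _ => by split_ifs <;> simp [hp ω]

lemma pf_apply_self_pos (hp : ∀ ω, 0 ≤ p ω) (f : Ω → T) {ω : Ω} (hω : 0 < p ω) :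
    0 < pf p f (f ω) := by
  refine hω.trans_le ?_
  have h := single_le_sum (f := fun ω' => if f ω' = f ω then p ω' else 0)
    (fun ω' _ => by split_ifs <;> simp [hp ω']) (mem_univ ω)
  rwa [if_pos rfl] at h

lemma sum_pf [Fintype T] (f : Ω → T) : ∑ t, pf p f t = ∑ ω, p ω := by
  unfold pf
  rw [sum_comm]
  simp

lemma sum_pf_mul [Fintype T] (f : Ω → T) (F : T → ℝ) :
    ∑ t, pf p f t * F t = ∑ ω, p ω * F (f ω) := by
  simp only [pf, sum_mul, ite_mul, zero_mul]
  rw [sum_comm]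
  simp

lemma sum_pf_prod_mk [Fintype B] (f : Ω → A) (g : Ω → B) (a : A) :
    ∑ b, pf p (fun ω => (f ω, g ω)) (a, b) = pf p f a := by
  unfold pf
  rw [sum_comm]
  refine sum_congr rfl fun ω _ => ?_
  by_cases h : f ω = a <;> simp [h, Prod.ext_iff]

lemma ent_pf_eq_sum [Fintype T] (f : Ω → T) :
    ent (pf p f) = -∑ ω, p ω * logb 2 (pf p f (f ω)) := by
  rw [ent, sum_pf_mul]

lemma ent_pf_congr [Fintype A] [Fintype B] {f : Ω → A} {g : Ω → B}
    (h : ∀ ω ω', f ω = f ω' ↔ g ω = g ω') :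
    ent (pf p f) = ent (pf p g) := by
  simp only [ent_pf_eq_sum, pf, h]

lemma ent_pf_const [Fintype T] (hp : IsPMF p) (t : T) : ent (pf p fun _ => t) = 0 := by
  simp [ent_pf_eq_sum, pf, hp.2]

end Pushforward

section Information

variable {Ω : Type*} [Fintype Ω] {p : Ω → ℝ}
variable {A B C D : Type*} [Fintype A] [Fintype B] [Fintype C] [Fintype D]

lemma cmi_pf_eq (c : Ω → C) (a : Ω → A) (b : Ω → B) :
    cmi (pf p fun ω => (c ω, a ω, b ω))
      = ent (pf p fun ω => (c ω, a ω)) + ent (pf p fun ω => (c ω, b ω))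
        - ent (pf p fun ω => (c ω, a ω, b ω)) - ent (pf p c) := by
  have hca : ∀ x y, ∑ z, pf p (fun ω => (c ω, a ω, b ω)) (x, y, z)
      = pf p (fun ω => (c ω, a ω)) (x, y) := fun x y => by
    rw [← sum_pf_prod_mk (fun ω => (c ω, a ω)) b]
    simp only [pf, Prod.mk.injEq, and_assoc]
  have hcb : ∀ x z, ∑ y, pf p (fun ω => (c ω, a ω, b ω)) (x, y, z)
      = pf p (fun ω => (c ω, b ω)) (x, z) := fun x z => by
    rw [← sum_pf_prod_mk (fun ω => (c ω, b ω)) a]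
    simp only [pf, Prod.mk.injEq, and_assoc, and_comm]
  simp only [cmi, hca, hcb, sum_pf_prod_mk, Prod.mk.eta]

lemma ent_pf_submodular (hp : IsPMF p) (c : Ω → C) (a : Ω → A) (b : Ω → B) :
    ent (pf p fun ω => (c ω, a ω, b ω)) + ent (pf p c)
      ≤ ent (pf p fun ω => (c ω, a ω)) + ent (pf p fun ω => (c ω, b ω)) := by
  simp only [ent_pf_eq_sum]
  set q := pf p fun ω => (c ω, a ω, b ω)
  set qca := pf p fun ω => (c ω, a ω)
  set qcb := pf p fun ω => (c ω, b ω)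
  set qc := pf p c
  set G : C × A × B → ℝ := fun t => qca (t.1, t.2.1) * qcb (t.1, t.2.2) / qc t.1
  have hG : ∑ t, G t = 1 := by
    simp only [G, Fintype.sum_prod_type, ← sum_div, ← sum_mul_sum, qca, qcb, qc, sum_pf_prod_mk,
      mul_self_div_self, sum_pf, hp.2]
  -- Grouping `ω` by the cell `(c ω, a ω, b ω)` turns `∑ p r` into `∑ G` over nonempty cells.
  set r : Ω → ℝ := fun ω => qca (c ω, a ω) * qcb (c ω, b ω) / (q (c ω, a ω, b ω) * qc (c ω))
  have hr : ∑ ω, p ω * r ω ≤ 1 := calc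
    ∑ ω, p ω * r ω = ∑ t, q t * (G t / q t) := by
      rw [sum_pf_mul]
      simp only [r, G, div_div, mul_comm (qc _)]
    _ ≤ ∑ t, G t := sum_le_sum fun t _ => by
      rcases eq_or_ne (q t) 0 with hq | hq
      · simp only [hq, zero_mul, G]
        exact div_nonneg (mul_nonneg (pf_nonneg hp.1 _ _) (pf_nonneg hp.1 _ _))
          (pf_nonneg hp.1 _ _)
      · rw [mul_div_cancel₀ _ hq]
    _ = 1 := hG
  have hpoint : ∀ ω, p ω * ((1 - r ω) / log 2) ≤ p ω * (logb 2 (q (c ω, a ω, b ω))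
      + logb 2 (qc (c ω)) - logb 2 (qca (c ω, a ω)) - logb 2 (qcb (c ω, b ω))) := fun ω => by
    rcases (hp.1 ω).eq_or_lt with hzero | hpos
    · simp [← hzero]
    · exact mul_le_mul_of_nonneg_left (one_sub_div_div_log_le_logb
        (pf_apply_self_pos hp.1 _ hpos) (pf_apply_self_pos hp.1 _ hpos)
        (pf_apply_self_pos hp.1 _ hpos) (pf_apply_self_pos hp.1 (fun ω => (c ω, b ω)) hpos))
        hpos.le
  have hlower : 0 ≤ ∑ ω, p ω * ((1 - r ω) / log 2) := by
    simp only [mul_div_assoc', ← sum_div, mul_sub, mul_one, sum_sub_distrib, hp.2]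
    exact div_nonneg (by linarith) (log_nonneg one_le_two)
  have hupper := hlower.trans (sum_le_sum fun ω _ => hpoint ω)
  simp only [mul_add, mul_sub, sum_add_distrib, sum_sub_distrib] at hupper
  linarith

lemma cmi_pf_nonneg (hp : IsPMF p) (c : Ω → C) (a : Ω → A) (b : Ω → B) :
    0 ≤ cmi (pf p fun ω => (c ω, a ω, b ω)) := by
  rw [cmi_pf_eq]
  linarith [ent_pf_submodular hp c a b]

lemma ent_pf_le_ent_pf_prod (hp : IsPMF p) (f : Ω → A) (g : Ω → B) :
    ent (pf p f) ≤ ent (pf p fun ω => (f ω, g ω)) := by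
  have h := ent_pf_submodular hp f g g
  have hgg : ent (pf p fun ω => (f ω, g ω, g ω)) = ent (pf p fun ω => (f ω, g ω)) :=
    ent_pf_congr fun ω ω' => by simp only [Prod.mk.injEq, and_self]
  linarith

lemma ent_pf_prod_le_add (hp : IsPMF p) (f : Ω → A) (g : Ω → B) :
    ent (pf p fun ω => (f ω, g ω)) ≤ ent (pf p f) + ent (pf p g) := by
  have h := ent_pf_submodular hp (fun _ => ()) f g
  have hfg : ent (pf p fun ω => ((), f ω, g ω)) = ent (pf p fun ω => (f ω, g ω)) :=
    ent_pf_congr fun ω ω' => by simp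
  have hf : ent (pf p fun ω => ((), f ω)) = ent (pf p f) := ent_pf_congr fun ω ω' => by simp
  have hg : ent (pf p fun ω => ((), g ω)) = ent (pf p g) := ent_pf_congr fun ω ω' => by simp
  linarith [ent_pf_const hp ()]

lemma cmi_pf_le_ent (hp : IsPMF p) (c : Ω → C) (a : Ω → A) (b : Ω → B) :
    cmi (pf p fun ω => (c ω, a ω, b ω)) ≤ ent (pf p b) := by
  have hmono : ent (pf p fun ω => (c ω, a ω)) ≤ ent (pf p fun ω => (c ω, a ω, b ω)) :=
    (ent_pf_le_ent_pf_prod hp _ b).trans_eq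
      (ent_pf_congr fun ω ω' => by simp only [Prod.mk.injEq, and_assoc])
  rw [cmi_pf_eq]
  linarith [ent_pf_prod_le_add hp c b]

lemma cmi_pf_congr {C' A' B' : Type*} [Fintype C'] [Fintype A'] [Fintype B']
    {c : Ω → C} {a : Ω → A} {b : Ω → B} {c' : Ω → C'} {a' : Ω → A'} {b' : Ω → B'}
    (hc : ∀ ω ω', c ω = c ω' ↔ c' ω = c' ω') (ha : ∀ ω ω', a ω = a ω' ↔ a' ω = a' ω')
    (hb : ∀ ω ω', b ω = b ω' ↔ b' ω = b' ω') :
    cmi (pf p fun ω => (c ω, a ω, b ω)) = cmi (pf p fun ω => (c' ω, a' ω, b' ω)) := by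
  rw [cmi_pf_eq, cmi_pf_eq]
  congr 1; congr 1; congr 1
  all_goals exact ent_pf_congr fun ω ω' => by simp only [Prod.mk.injEq, hc, ha, hb]

lemma cmi_pf_chain (c : Ω → C) (a : Ω → A) (b : Ω → B) (d : Ω → D) :
    cmi (pf p fun ω => (c ω, a ω, (b ω, d ω)))
      = cmi (pf p fun ω => (c ω, a ω, b ω)) + cmi (pf p fun ω => ((c ω, b ω), a ω, d ω)) := by
  have hcab : ent (pf p fun ω => ((c ω, b ω), a ω)) = ent (pf p fun ω => (c ω, a ω, b ω)) :=
    ent_pf_congr fun ω ω' => by simp only [Prod.mk.injEq]; tauto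
  have hcbd : ent (pf p fun ω => ((c ω, b ω), d ω)) = ent (pf p fun ω => (c ω, b ω, d ω)) :=
    ent_pf_congr fun ω ω' => by simp only [Prod.mk.injEq, and_assoc]
  have hcabd : ent (pf p fun ω => ((c ω, b ω), a ω, d ω))
      = ent (pf p fun ω => (c ω, a ω, b ω, d ω)) :=
    ent_pf_congr fun ω ω' => by simp only [Prod.mk.injEq]; tauto
  rw [cmi_pf_eq, cmi_pf_eq, cmi_pf_eq, hcab, hcbd, hcabd]
  ring

lemma cmi_pf_le_cmi_pf_prod (hp : IsPMF p) (c : Ω → C) (a : Ω → A) (b : Ω → B) (d : Ω → D) :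
    cmi (pf p fun ω => (c ω, a ω, b ω)) ≤ cmi (pf p fun ω => (c ω, a ω, (b ω, d ω))) := by
  rw [cmi_pf_chain]
  linarith [cmi_pf_nonneg hp (fun ω => (c ω, b ω)) a d]

theorem cmi_pf_sub_cmi_pf_le_ent {U V Z Y L : Type*} [Fintype U] [Fintype V] [Fintype Z]
    [Fintype Y] [Fintype L] (hp : IsPMF p) (u : Ω → U) (v : Ω → V) (z : Ω → Z) (y : Ω → Y)
    (l : Ω → L) (hMarkov : cmi (pf p fun ω => ((u ω, z ω), v ω, y ω)) = 0) :
    cmi (pf p fun ω => (u ω, v ω, (l ω, y ω))) - cmi (pf p fun ω => (u ω, v ω, z ω))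
      ≤ ent (pf p l) := by
  have hsplit : cmi (pf p fun ω => (u ω, v ω, (l ω, y ω)))
      ≤ cmi (pf p fun ω => (u ω, v ω, z ω)) + cmi (pf p fun ω => ((u ω, z ω), v ω, y ω))
        + cmi (pf p fun ω => (((u ω, z ω), y ω), v ω, l ω)) := calc
    _ ≤ cmi (pf p fun ω => (u ω, v ω, ((l ω, y ω), z ω))) := cmi_pf_le_cmi_pf_prod hp _ _ _ _
    _ = cmi (pf p fun ω => (u ω, v ω, (z ω, (y ω, l ω)))) :=
      cmi_pf_congr (fun _ _ => Iff.rfl) (fun _ _ => Iff.rfl)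
        fun ω ω' => by simp only [Prod.mk.injEq]; tauto
    _ = _ := by rw [cmi_pf_chain, cmi_pf_chain, add_assoc]
  linarith [cmi_pf_le_ent hp (fun ω => ((u ω, z ω), y ω)) v l]

end Information

/-- if `V — (S,U,X) — Y` is a Markov chain, then with `Ỹ = (L,Y)` and
`Z̃ = (S,X)` one has `I(V;Ỹ|U) − I(V;Z̃|U) ≤ H(L)`. -/
theorem stmt_8 {L S U V X Y : Type*}
    [Fintype L] [Fintype S] [Fintype U] [Fintype V] [Fintype X] [Fintype Y]
    (p : L × S × U × V × X × Y → ℝ) (hp : IsPMF p)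
    (hMarkov : cmi (pf p (fun ω =>
        (((ω.2.1, ω.2.2.1, ω.2.2.2.2.1) : S × U × X), ω.2.2.2.1, ω.2.2.2.2.2))) = 0) :
    cmi (pf p (fun ω => (ω.2.2.1, ω.2.2.2.1, ((ω.1, ω.2.2.2.2.2) : L × Y))))
      - cmi (pf p (fun ω => (ω.2.2.1, ω.2.2.2.1, ((ω.2.1, ω.2.2.2.2.1) : S × X))))
    ≤ ent (pf p (fun ω => ω.1)) := by
  refine cmi_pf_sub_cmi_pf_le_ent hp _ _ (fun ω => (ω.2.1, ω.2.2.2.2.1)) _ _ ?_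
  rw [← hMarkov]
  exact cmi_pf_congr (fun ω ω' => by simp only [Prod.mk.injEq]; tauto) (fun _ _ => Iff.rfl)
    fun _ _ => Iff.rfl
end
end
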